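/- Let R be the free noncommutative F-algebra on two generators X₁, X₂ over F = ℚ(A), with the endomorphisms T₁, T₁⁻, T₂, T₂⁻ and the two-sided ideal J as above. Then each of T₁, T₁⁻, T₂, T₂⁻ maps J into J. Consequently, each of them descends to a well-defined F-algebra endomorphism of the quotient algebra B = R/J, i.e. there are F-algebra endomorphisms τ₁, τ₁⁻, τ₂, τ₂⁻ of B with τ_j ∘ π = π ∘ T_j (and similarly for the others), where π : R → B is the quotient map. -/

import Mathlib

/-- `F = ℚ(A)`, the field of rational functions in one variable over `ℚ`. -/
noncomputable abbrev F : Type := RatFunc ℚ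

/-- The variable `A ∈ ℚ(A)`. -/
noncomputable def A : F := RatFunc.X

/-- The deformed bracket `[x,y]_A = A·(x*y) − A⁻¹·(y*x)` in an `F`-algebra. -/
noncomputable def brA {S : Type*} [Ring S] [Algebra F S] (x y : S) : S :=
  A • (x * y) - A⁻¹ • (y * x)

/-- `R`, the free noncommutative `F`-algebra on two generators. -/
noncomputable abbrev R : Type := FreeAlgebra F (Fin 2)

/-- The first generator `X₁`. -/
noncomputable def X1 : R := FreeAlgebra.ι F 0

/-- The second generator `X₂`. -/
noncomputable def X2 : R := FreeAlgebra.ι F 1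

/-- The generators as a function on `Fin 2`. -/
noncomputable def X : Fin 2 → R := ![X1, X2]

/-- `T₁ : X₁ ↦ X₁, X₂ ↦ [X₁,X₂]_A`. -/
noncomputable def T1 : R →ₐ[F] R := FreeAlgebra.lift F ![X1, brA X1 X2]

/-- `T₁⁻ : X₁ ↦ X₁, X₂ ↦ [X₂,X₁]_A`. -/
noncomputable def T1inv : R →ₐ[F] R := FreeAlgebra.lift F ![X1, brA X2 X1]

/-- `T₂ : X₁ ↦ [X₂,X₁]_A, X₂ ↦ X₂`. -/
noncomputable def T2 : R →ₐ[F] R := FreeAlgebra.lift F ![brA X2 X1, X2]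

/-- `T₂⁻ : X₁ ↦ [X₁,X₂]_A, X₂ ↦ X₂`. -/
noncomputable def T2inv : R →ₐ[F] R := FreeAlgebra.lift F ![brA X1 X2, X2]

/-- The two-sided ideal `J` generated by `[[X₁,X₂]_A, X₁]_A − X₂` and
`[[X₂,X₁]_A, X₂]_A − X₁`. -/
noncomputable def J : TwoSidedIdeal R :=
  TwoSidedIdeal.span {brA (brA X1 X2) X1 - X2, brA (brA X2 X1) X2 - X1}

/-- The quotient algebra `B = R/J`. -/
noncomputable abbrev B : Type := RingQuot (fun x y : R => x - y ∈ J)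

/-- The quotient map `π : R → B` as an `F`-algebra homomorphism. -/
noncomputable def pi : R →ₐ[F] B := RingQuot.mkAlgHom F (fun x y : R => x - y ∈ J)

/-! The relations of `B` say that the pair `(π X₁, π X₂)` satisfies `[[a,b]_A,a]_A = b` and
`[[b,a]_A,b]_A = a`. Thanks to the identity `[[x,y]_A,x]_A = [x,[y,x]_A]_A`, pairs satisfying
these relations are carried to such pairs by `(a,b) ↦ (a,[a,b]_A)`, `(a,[b,a]_A)`, `([b,a]_A,b)`,
`([a,b]_A,b)`, which are the actions of `T₁, T₁⁻, T₂, T₂⁻` on the generators. Hence `π ∘ T`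
kills `J` for each of them: this is `T(J) ⊆ J`, and it lets `π ∘ T` factor through `B`. -/

section Bracket

variable {S S' : Type*} [Ring S] [Algebra F S] [Ring S'] [Algebra F S']

lemma map_brA (f : S →ₐ[F] S') (x y : S) : f (brA x y) = brA (f x) (f y) := by
  simp only [brA, map_sub, map_smul, map_mul]

lemma brA_brA_rotate (x y : S) : brA (brA x y) x = brA x (brA y x) := by
  simp only [brA, smul_sub, sub_mul, mul_sub, smul_mul_assoc, mul_smul_comm, smul_smul,
    mul_assoc, mul_comm A⁻¹ A]
  abel

/-- The defining relations of `B`, imposed on a pair `(a, b)` in place of `(X₁, X₂)`. -/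
def SatisfiesRelations (a b : S) : Prop :=
  brA (brA a b) a = b ∧ brA (brA b a) b = a

namespace SatisfiesRelations

variable {a b : S}

lemma symm (h : SatisfiesRelations a b) : SatisfiesRelations b a := ⟨h.2, h.1⟩

lemma brA_left (h : SatisfiesRelations a b) : SatisfiesRelations a (brA a b) := by
  have hba : brA b (brA a b) = a := by rw [← brA_brA_rotate, h.2]
  refine ⟨?_, ?_⟩
  · rw [brA_brA_rotate, h.1]
  · rw [h.1, hba]

lemma brA_right (h : SatisfiesRelations a b) : SatisfiesRelations a (brA b a) := by
  have hab : brA a (brA b a) = b := by rw [← brA_brA_rotate, h.1]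
  refine ⟨?_, ?_⟩
  · rw [hab]
  · rw [brA_brA_rotate, hab, h.2]

end SatisfiesRelations

end Bracket

lemma RingQuot.mkRingHom_eq_zero_iff {T : Type*} [Ring T] (I : TwoSidedIdeal T) {x : T} :
    RingQuot.mkRingHom (fun x y : T => x - y ∈ I) x = 0 ↔ x ∈ I := by
  refine ⟨fun h => ?_, fun h => ?_⟩
  · rw [← map_zero (RingQuot.mkRingHom _), RingQuot.mkRingHom_def] at h
    have hgen : RingConGen.Rel (fun x y : T => x - y ∈ I) x 0 := by
      rw [← RingQuot.eqvGen_rel_eq]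
      exact Quot.eqvGen_exact (congrArg RingQuot.toQuot h)
    have hI : ringConGen (fun x y : T => x - y ∈ I) ≤ I.ringCon :=
      RingCon.ringConGen_le.mpr fun a b hab => (I.rel_iff a b).mpr hab
    simpa using (I.rel_iff x 0).mp (hI hgen)
  · rw [← map_zero (RingQuot.mkRingHom _)]
    exact RingQuot.mkRingHom_rel (by simpa using h)

lemma pi_eq_zero_iff {x : R} : pi x = 0 ↔ x ∈ J := by
  rw [← RingQuot.mkRingHom_eq_zero_iff J, ← RingQuot.mkAlgHom_coe F]
  exact Iff.rfl

lemma satisfiesRelations_pi : SatisfiesRelations (pi X1) (pi X2) := by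
  have h₁ : pi (brA (brA X1 X2) X1 - X2) = 0 :=
    pi_eq_zero_iff.mpr (TwoSidedIdeal.subset_span (Or.inl rfl))
  have h₂ : pi (brA (brA X2 X1) X2 - X1) = 0 :=
    pi_eq_zero_iff.mpr (TwoSidedIdeal.subset_span (Or.inr rfl))
  rw [map_sub, map_brA, map_brA, sub_eq_zero] at h₁ h₂
  exact ⟨h₁, h₂⟩

lemma J_le_ker {S : Type*} [Ring S] [Algebra F S] (f : R →ₐ[F] S)
    (h : SatisfiesRelations (f X1) (f X2)) : J ≤ TwoSidedIdeal.ker f := by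
  rw [J, TwoSidedIdeal.span_le]
  rintro _ (rfl | rfl) <;>
    simp only [SetLike.mem_coe, TwoSidedIdeal.mem_ker, map_sub, map_brA, h.1, h.2, sub_self]

lemma map_mem_J_of_satisfiesRelations (T : R →ₐ[F] R)
    (h : SatisfiesRelations (pi (T X1)) (pi (T X2))) : ∀ x ∈ J, T x ∈ J :=
  fun _ hx =>
    pi_eq_zero_iff.mp ((TwoSidedIdeal.mem_ker (pi.comp T)).mp (J_le_ker (pi.comp T) h hx))

lemma exists_algHom_comp_pi_eq (T : R →ₐ[F] R) (hT : ∀ x ∈ J, T x ∈ J) :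
    ∃ τ : B →ₐ[F] B, τ.comp pi = pi.comp T := by
  have hrel : ∀ ⦃x y : R⦄, x - y ∈ J → pi.comp T x = pi.comp T y := fun x y hxy => by
    rw [← sub_eq_zero, ← map_sub, AlgHom.comp_apply, pi_eq_zero_iff]
    exact hT _ hxy
  exact ⟨RingQuot.liftAlgHom F ⟨pi.comp T, hrel⟩,
    AlgHom.ext (RingQuot.liftAlgHom_mkAlgHom_apply F (pi.comp T) hrel)⟩

lemma lift_X1 (a b : R) : FreeAlgebra.lift F ![a, b] X1 = a := by
  simp [X1]

lemma lift_X2 (a b : R) : FreeAlgebra.lift F ![a, b] X2 = b := by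
  simp [X2]

/-- Each of `T₁, T₁⁻, T₂, T₂⁻` maps `J` into `J`, and consequently each descends to a
well-defined `F`-algebra endomorphism of `B = R/J` commuting with the quotient map `π`. -/
theorem T_descend_to_quotient :
    (∀ x ∈ J, T1 x ∈ J) ∧ (∀ x ∈ J, T1inv x ∈ J) ∧
    (∀ x ∈ J, T2 x ∈ J) ∧ (∀ x ∈ J, T2inv x ∈ J) ∧
    ∃ τ1 τ1inv τ2 τ2inv : B →ₐ[F] B,
      τ1.comp pi = pi.comp T1 ∧ τ1inv.comp pi = pi.comp T1inv ∧
      τ2.comp pi = pi.comp T2 ∧ τ2inv.comp pi = pi.comp T2inv := by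
  have hB := satisfiesRelations_pi
  have h1 : ∀ x ∈ J, T1 x ∈ J := map_mem_J_of_satisfiesRelations T1 <| by
    simpa only [T1, lift_X1, lift_X2, map_brA] using hB.brA_left
  have h1inv : ∀ x ∈ J, T1inv x ∈ J := map_mem_J_of_satisfiesRelations T1inv <| by
    simpa only [T1inv, lift_X1, lift_X2, map_brA] using hB.brA_right
  have h2 : ∀ x ∈ J, T2 x ∈ J := map_mem_J_of_satisfiesRelations T2 <| by
    simpa only [T2, lift_X1, lift_X2, map_brA] using hB.symm.brA_left.symm
  have h2inv : ∀ x ∈ J, T2inv x ∈ J := map_mem_J_of_satisfiesRelations T2inv <| by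
    simpa only [T2inv, lift_X1, lift_X2, map_brA] using hB.symm.brA_right.symm
  obtain ⟨τ1, e1⟩ := exists_algHom_comp_pi_eq T1 h1
  obtain ⟨τ1inv, e1inv⟩ := exists_algHom_comp_pi_eq T1inv h1inv
  obtain ⟨τ2, e2⟩ := exists_algHom_comp_pi_eq T2 h2
  obtain ⟨τ2inv, e2inv⟩ := exists_algHom_comp_pi_eq T2inv h2inv
  exact ⟨h1, h1inv, h2, h2inv, τ1, τ1inv, τ2, τ2inv, e1, e1inv, e2, e2inv⟩
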